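/- Let s > 5/2 and suppose (ξ_k)_{k≥1} satisfies Σ_{k≥1} ‖ξ_k‖_{H^σ} < ∞ for every σ ≥ 0. Define, for θ ∈ H^s(𝕋), g(θ) = −(𝓗θ) ∂_x θ + ½ Σ_{k=1}^∞ 𝓛²_{ξ_k} θ. Then there is a constant C > 0 (depending on s and (ξ_k)) such that for all θ ∈ H^s(𝕋): ‖g(θ)‖_{H^{s-2}} ≤ C (1 + ‖θ‖²_{H^s}) and (Σ_{k=1}^∞ ‖𝓛_{ξ_k} θ‖²_{H^{s-1}})^{1/2} ≤ C ‖θ‖_{H^s}. -/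

import Mathlib

noncomputable section
open scoped BigOperators

/-- A (complex-valued) function on the torus `𝕋 = ℝ/2πℤ`, represented by its sequence of
Fourier coefficients `f̂ : ℤ → ℂ`. -/
abbrev FC := ℤ → ℂ

namespace FC

/-- The Sobolev weight `(1+k²)^s`. -/
def wt (s : ℝ) (k : ℤ) : ℝ := (1 + (k : ℝ) ^ 2) ^ s

/-- `c` represents a function belonging to the Sobolev space `H^s(𝕋)`. -/
def memHs (s : ℝ) (c : FC) : Prop := Summable fun k : ℤ => wt s k * ‖c k‖ ^ 2

/-- The `H^s(𝕋)` norm: `‖f‖²_{H^s} = Σ_{k∈ℤ} (1+k²)^s |f̂(k)|²`. -/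
def hsNorm (s : ℝ) (c : FC) : ℝ := Real.sqrt (∑' k : ℤ, wt s k * ‖c k‖ ^ 2)

/-- The `H^s(𝕋)` inner product `(f,g)_{H^s} = Σ_{k∈ℤ} (1+k²)^s f̂(k) conj(ĝ(k))`
(its real part; the sum is real for real-valued functions). -/
def hsInner (s : ℝ) (c d : FC) : ℝ :=
  (∑' k : ℤ, ((wt s k : ℂ) * (c k * (starRingEnd ℂ) (d k)))).re

/-- `c` represents a real-valued function (conjugate-symmetric coefficients). -/
def isReal (c : FC) : Prop := ∀ k : ℤ, c (-k) = (starRingEnd ℂ) (c k)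

/-- The derivative `∂ₓ`, i.e. the Fourier multiplier `ik`. -/
def D1 (c : FC) : FC := fun k => Complex.I * (k : ℂ) * c k

/-- The pointwise product of functions, i.e. convolution of Fourier coefficients. -/
def mul (c d : FC) : FC := fun k => ∑' j : ℤ, c j * d (k - j)

/-- The represented function, evaluated at `x ∈ ℝ`. -/
def eval (c : FC) (x : ℝ) : ℂ := ∑' k : ℤ, c k * Complex.exp (Complex.I * (k : ℂ) * (x : ℂ))

/-- The `L^∞` norm (supremum of the represented periodic function over ℝ). -/
def linfty (c : FC) : ℝ := ⨆ x : ℝ, ‖eval c x‖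

/-- The `W^{1,∞}` norm. -/
def w1infty (c : FC) : ℝ := linfty c + linfty (D1 c)

/-- A Fourier multiplier operator with real symbol `m`. -/
def mult (m : ℤ → ℝ) (c : FC) : FC := fun k => (m k : ℂ) * c k

/-- The operator `(1-∂ₓ²)⁻¹`, i.e. the Fourier multiplier `(1+k²)⁻¹`. -/
def helmInv : FC → FC := mult fun k => (1 + (k : ℝ) ^ 2)⁻¹

/-- The operator `1-∂ₓ²`, i.e. the Fourier multiplier `1+k²`. -/
def helm : FC → FC := mult fun k => 1 + (k : ℝ) ^ 2

/-- The operator `T̃_ε = (1-ε²∂ₓ²)⁻¹`, i.e. the Fourier multiplier `(1+ε²k²)⁻¹`. -/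
def T (ε : ℝ) : FC → FC := mult fun k => (1 + ε ^ 2 * (k : ℝ) ^ 2)⁻¹

/-- The periodic Hilbert transform, i.e. the Fourier multiplier `-i·sgn(k)`. -/
def hilbert (c : FC) : FC := fun k => -Complex.I * (Int.sign k : ℂ) * c k

/-- The Friedrichs-type mollifier `J_ε`, the Fourier multiplier `ĵ(εk)`. -/
def Jmol (jhat : ℝ → ℝ) (ε : ℝ) : FC → FC := mult fun k => jhat (ε * (k : ℝ))

/-- The generalized Lie derivative `𝓛_ξ f = ξ ∂ₓ f + (∂ₓ ξ) f`. -/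
def lie (ξ c : FC) : FC := mul ξ (D1 c) + mul (D1 ξ) c

/-- `𝓛²_ξ f = 𝓛_ξ (𝓛_ξ f)`. -/
def lie2 (ξ c : FC) : FC := lie ξ (lie ξ c)

/-- The coefficientwise sum `Σ_{k∈ℕ} F k` of a sequence of functions. -/
def tsumFC (F : ℕ → FC) : FC := fun m => ∑' k : ℕ, F k m

/-- The norm on the product space `H^{s₁}×H^{s₂}`. -/
def pairNorm (s₁ s₂ : ℝ) (c d : FC) : ℝ := Real.sqrt (hsNorm s₁ c ^ 2 + hsNorm s₂ d ^ 2)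

/-- The inner product on the product space `H^{s₁}×H^{s₂}`:
`((c₁,d₁),(c₂,d₂)) ↦ (c₁,c₂)_{H^{s₁}} + (d₁,d₂)_{H^{s₂}}`. -/
def pairInner (s₁ s₂ : ℝ) (c₁ d₁ c₂ d₂ : FC) : ℝ := hsInner s₁ c₁ c₂ + hsInner s₂ d₁ d₂

end FC

/-- The singular drift of the stochastic CCF model:
`g(θ) = −(𝓗θ) ∂ₓθ + ½ Σ_k 𝓛²_{ξ_k} θ`. -/
def gCCF (ξ : ℕ → FC) (θ : FC) : FC :=
  -(FC.mul (FC.hilbert θ) (FC.D1 θ)) + (1 / 2 : ℝ) • FC.tsumFC fun k => FC.lie2 (ξ k) θ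

/-!
The one analytic input is the product estimate `‖fg‖_τ ≲ ‖f‖_{τ+1} ‖g‖_τ` for `τ ≥ 0`. It gives
`‖(𝓗θ) ∂ₓθ‖_{s-2} ≲ ‖θ‖_s²`, `‖𝓛_ξ θ‖_{s-1} ≲ ‖ξ‖_{s+1} ‖θ‖_s` and
`‖𝓛²_ξ θ‖_{s-2} ≲ ‖ξ‖_{s+1}² ‖θ‖_s`; the sums over `k` are then controlled by the triangle
inequality and `Σ_k ‖ξ_k‖² ≤ (Σ_k ‖ξ_k‖)²`.
-/

open scoped ENNReal

namespace ENNReal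

variable {ι κ : Type*}

lemma rpow_one_half_sq (x : ℝ≥0∞) : (x ^ (1 / 2 : ℝ)) ^ 2 = x := by
  simpa using rpow_inv_natCast_pow two_ne_zero x

lemma sq_rpow_one_half (x : ℝ≥0∞) : (x ^ 2) ^ (1 / 2 : ℝ) = x := by
  simpa using pow_rpow_inv_natCast two_ne_zero x

def l2Norm (a : ι → ℝ≥0∞) : ℝ≥0∞ := (∑' i, a i ^ 2) ^ (1 / 2 : ℝ)

lemma l2Norm_sq (a : ι → ℝ≥0∞) : l2Norm a ^ 2 = ∑' i, a i ^ 2 :=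
  rpow_one_half_sq _

lemma l2Norm_le_iff {a : ι → ℝ≥0∞} {r : ℝ≥0∞} : l2Norm a ≤ r ↔ ∑' i, a i ^ 2 ≤ r ^ 2 := by
  rw [l2Norm, one_div, rpow_inv_le_iff two_pos, rpow_two]

lemma l2Norm_mono {a b : ι → ℝ≥0∞} (h : ∀ i, a i ≤ b i) : l2Norm a ≤ l2Norm b :=
  l2Norm_le_iff.2 <| (l2Norm_sq b).symm ▸ ENNReal.tsum_le_tsum fun i => by gcongr; exact h i

lemma l2Norm_const_mul (c : ℝ≥0∞) (a : ι → ℝ≥0∞) :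
    l2Norm (fun i => c * a i) = c * l2Norm a := by
  simp_rw [l2Norm, mul_pow, ENNReal.tsum_mul_left,
    mul_rpow_of_nonneg _ _ (by norm_num : (0 : ℝ) ≤ 1 / 2), sq_rpow_one_half]

lemma l2Norm_le_tsum (a : ι → ℝ≥0∞) : l2Norm a ≤ ∑' i, a i := by
  rw [l2Norm_le_iff, sq, ← ENNReal.tsum_mul_left]
  exact ENNReal.tsum_le_tsum fun i => by
    rw [sq]; exact mul_le_mul_left (ENNReal.le_tsum i) _

lemma tsum_mul_le_l2Norm_mul_l2Norm (a b : ι → ℝ≥0∞) :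
    ∑' i, a i * b i ≤ l2Norm a * l2Norm b := by
  rw [ENNReal.tsum_eq_iSup_sum]
  refine iSup_le fun s => (inner_le_Lp_mul_Lq s a b Real.HolderConjugate.two_two).trans ?_
  simp only [rpow_two, l2Norm]
  gcongr <;> exact ENNReal.sum_le_tsum s

lemma l2Norm_tsum_le (a : κ → ι → ℝ≥0∞) :
    l2Norm (fun i => ∑' n, a n i) ≤ ∑' n, l2Norm (a n) := by
  have expand (x : κ → ℝ≥0∞) : (∑' n, x n) ^ 2 = ∑' n, ∑' m, x n * x m := by
    simp_rw [sq, ← ENNReal.tsum_mul_right, ← ENNReal.tsum_mul_left]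
  rw [l2Norm_le_iff]
  simp_rw [expand]
  calc ∑' i, ∑' n, ∑' m, a n i * a m i = ∑' n, ∑' m, ∑' i, a n i * a m i := by
        rw [ENNReal.tsum_comm]; exact tsum_congr fun n => ENNReal.tsum_comm
    _ ≤ ∑' n, ∑' m, l2Norm (a n) * l2Norm (a m) :=
        ENNReal.tsum_le_tsum fun n => ENNReal.tsum_le_tsum fun m =>
          tsum_mul_le_l2Norm_mul_l2Norm _ _

lemma l2Norm_add_le (a b : ι → ℝ≥0∞) : l2Norm (a + b) ≤ l2Norm a + l2Norm b := by
  show l2Norm (fun i => a i + b i) ≤ _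
  simpa [tsum_fintype] using l2Norm_tsum_le fun t : Bool => bif t then a else b

/-- Young's convolution inequality `ℓ¹ * ℓ² ⊆ ℓ²`. -/
lemma l2Norm_conv_le {G : Type*} [AddGroup G] (a b : G → ℝ≥0∞) :
    l2Norm (fun k => ∑' j, a j * b (k - j)) ≤ (∑' j, a j) * l2Norm b := by
  have pointwise (k : G) :
      (∑' j, a j * b (k - j)) ^ 2 ≤ (∑' j, a j) * ∑' j, a j * b (k - j) ^ 2 := by
    have h := tsum_mul_le_l2Norm_mul_l2Norm (fun j => a j ^ (1 / 2 : ℝ))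
      (fun j => a j ^ (1 / 2 : ℝ) * b (k - j))
    simp_rw [← mul_assoc, ← sq, rpow_one_half_sq] at h
    calc (∑' j, a j * b (k - j)) ^ 2 ≤ _ := pow_le_pow_left₀ zero_le h 2
      _ = _ := by simp_rw [mul_pow, l2Norm_sq, mul_pow, rpow_one_half_sq]
  rw [l2Norm_le_iff, mul_pow, l2Norm_sq]
  calc ∑' k, (∑' j, a j * b (k - j)) ^ 2
      ≤ ∑' k, (∑' j, a j) * ∑' j, a j * b (k - j) ^ 2 := ENNReal.tsum_le_tsum pointwise
    _ = (∑' j, a j) * ∑' j, a j * ∑' k, b (k - j) ^ 2 := by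
        rw [ENNReal.tsum_mul_left, ENNReal.tsum_comm]
        exact congrArg _ (tsum_congr fun j => ENNReal.tsum_mul_left)
    _ = (∑' j, a j) ^ 2 * ∑' m, b m ^ 2 := by
        have shift (j : G) : ∑' k, b (k - j) ^ 2 = ∑' m, b m ^ 2 :=
          (Equiv.subRight j).tsum_eq fun m => b m ^ 2
        simp_rw [shift, ENNReal.tsum_mul_right, sq, mul_assoc]

lemma toReal_l2Norm_ofReal {x : ι → ℝ} (hx : ∀ i, 0 ≤ x i) :
    (l2Norm fun i => ENNReal.ofReal (x i)).toReal = √(∑' i, x i ^ 2) := by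
  rw [l2Norm, ← toReal_rpow, Real.sqrt_eq_rpow,
    tsum_toReal_eq fun i => pow_ne_top ofReal_ne_top]
  simp_rw [toReal_pow, toReal_ofReal (hx _)]

lemma l2Norm_ofReal {x : ι → ℝ} (hx : ∀ i, 0 ≤ x i) (hs : Summable fun i => x i ^ 2) :
    l2Norm (fun i => ENNReal.ofReal (x i)) = ENNReal.ofReal √(∑' i, x i ^ 2) := by
  rw [← toReal_l2Norm_ofReal hx, ofReal_toReal]
  refine rpow_ne_top_of_nonneg (by norm_num) ?_
  simp_rw [← ofReal_pow (hx _), ← ofReal_tsum_of_nonneg (fun i => sq_nonneg _) hs]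
  exact ofReal_ne_top

lemma summable_and_sqrt_tsum_le_of_l2Norm_le {a : ι → ℝ≥0∞} {r : ℝ} (hr : 0 ≤ r)
    (h : l2Norm a ≤ ENNReal.ofReal r) :
    Summable (fun i => (a i).toReal ^ 2) ∧ √(∑' i, (a i).toReal ^ 2) ≤ r := by
  rw [l2Norm_le_iff, ← ofReal_pow hr] at h
  have hfin : ∑' i, a i ^ 2 ≠ ∞ := ne_top_of_le_ne_top ofReal_ne_top h
  simp_rw [← toReal_pow]
  refine ⟨summable_toReal hfin, ?_⟩
  rw [← tsum_toReal_eq (ENNReal.ne_top_of_tsum_ne_top hfin), ← Real.sqrt_sq hr]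
  exact Real.sqrt_le_sqrt (toReal_le_of_le_ofReal (sq_nonneg r) h)

end ENNReal

namespace FC

open ENNReal (l2Norm)

lemma one_le_one_add_sq (k : ℤ) : (1 : ℝ) ≤ 1 + (k : ℝ) ^ 2 :=
  le_add_of_nonneg_right (sq_nonneg _)

lemma wt_nonneg (s : ℝ) (k : ℤ) : 0 ≤ wt s k :=
  Real.rpow_nonneg (by positivity) s

lemma wt_mono {σ τ : ℝ} (h : σ ≤ τ) (k : ℤ) : wt σ k ≤ wt τ k :=
  Real.rpow_le_rpow_of_exponent_le (one_le_one_add_sq k) h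

lemma wt_add (σ τ : ℝ) (k : ℤ) : wt (σ + τ) k = wt σ k * wt τ k :=
  Real.rpow_add (by positivity) σ τ

lemma wt_half_sq (s : ℝ) (k : ℤ) : wt (s / 2) k ^ 2 = wt s k := by
  rw [sq, ← wt_add, add_halves]

lemma abs_le_wt_half (k : ℤ) : |(k : ℝ)| ≤ wt (1 / 2) k := by
  rw [wt, ← Real.sqrt_eq_rpow]
  exact Real.abs_le_sqrt (le_add_of_nonneg_left zero_le_one)

/-- Peetre's inequality. -/
lemma wt_add_le {τ : ℝ} (hτ : 0 ≤ τ) (j l : ℤ) :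
    wt τ (j + l) ≤ 2 ^ τ * (wt τ j * wt τ l) := by
  have h : (1 : ℝ) + ((j + l : ℤ) : ℝ) ^ 2 ≤ 2 * ((1 + (j : ℝ) ^ 2) * (1 + (l : ℝ) ^ 2)) := by
    push_cast
    nlinarith [sq_nonneg ((j : ℝ) - l), sq_nonneg ((j : ℝ) * l)]
  calc wt τ (j + l) ≤ (2 * ((1 + (j : ℝ) ^ 2) * (1 + (l : ℝ) ^ 2))) ^ τ :=
        Real.rpow_le_rpow (by positivity) h hτ
    _ = 2 ^ τ * (wt τ j * wt τ l) := by
        rw [Real.mul_rpow zero_le_two (by positivity), Real.mul_rpow (by positivity) (by positivity)]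
        rfl

lemma summable_wt_neg_one : Summable (wt (-1)) := by
  refine (Real.summable_one_div_int_pow.mpr one_lt_two).of_norm_bounded_eventually ?_
  filter_upwards [Filter.eventually_cofinite_ne 0] with j hj
  have hj0 : (j : ℝ) ≠ 0 := Int.cast_ne_zero.mpr hj
  have hj2 : (0 : ℝ) < (j : ℝ) ^ 2 := by positivity
  rw [wt, Real.rpow_neg_one, Real.norm_of_nonneg (by positivity), one_div]
  exact inv_anti₀ hj2 (le_add_of_nonneg_left zero_le_one)

lemma ofReal_mul_norm_tsum_le {ι E : Type*} [NormedAddCommGroup E] {w : ℝ} (hw : 0 ≤ w)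
    (h : ι → E) :
    ENNReal.ofReal (w * ‖∑' i, h i‖) ≤ ∑' i, ENNReal.ofReal (w * ‖h i‖) := by
  simp_rw [ENNReal.ofReal_mul hw, ofReal_norm, ENNReal.tsum_mul_left]
  gcongr
  exact enorm_tsum_le_tsum_enorm

def prodConst (τ : ℝ) : ℝ := 2 ^ (τ / 2) * √(∑' j : ℤ, wt (-1) j)

lemma prodConst_nonneg (τ : ℝ) : 0 ≤ prodConst τ := by
  unfold prodConst; positivity

/-- `‖c‖_{H^s}` valued in `ℝ≥0∞`: it is finite exactly when `c ∈ H^s`, so the estimates below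
need no summability side conditions. -/
def hsENorm (s : ℝ) (c : FC) : ℝ≥0∞ := l2Norm fun k => ENNReal.ofReal (wt (s / 2) k * ‖c k‖)

lemma hsNorm_eq_toReal_hsENorm (s : ℝ) (c : FC) : hsNorm s c = (hsENorm s c).toReal := by
  rw [hsENorm, ENNReal.toReal_l2Norm_ofReal fun k => mul_nonneg (wt_nonneg _ _) (norm_nonneg _)]
  simp_rw [mul_pow, wt_half_sq]
  rfl

lemma ofReal_hsNorm {s : ℝ} {c : FC} (h : memHs s c) :
    ENNReal.ofReal (hsNorm s c) = hsENorm s c := by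
  rw [hsENorm, ENNReal.l2Norm_ofReal fun k => mul_nonneg (wt_nonneg _ _) (norm_nonneg _)]
  · simp_rw [mul_pow, wt_half_sq]
    rfl
  · simp_rw [mul_pow, wt_half_sq]
    exact h

lemma hsNorm_nonneg (s : ℝ) (c : FC) : 0 ≤ hsNorm s c := Real.sqrt_nonneg _

lemma hsENorm_le_of_forall_le {σ τ : ℝ} {c d : FC}
    (h : ∀ k, wt (σ / 2) k * ‖c k‖ ≤ wt (τ / 2) k * ‖d k‖) : hsENorm σ c ≤ hsENorm τ d :=
  ENNReal.l2Norm_mono fun k => ENNReal.ofReal_le_ofReal (h k)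

lemma hsENorm_mono {σ τ : ℝ} (h : σ ≤ τ) (c : FC) : hsENorm σ c ≤ hsENorm τ c :=
  hsENorm_le_of_forall_le fun k => by gcongr; exact wt_mono (by linarith) k

lemma hsENorm_neg (s : ℝ) (c : FC) : hsENorm s (-c) = hsENorm s c := by
  simp [hsENorm]

lemma hsENorm_smul (s r : ℝ) (c : FC) : hsENorm s (r • c) = ‖r‖ₑ * hsENorm s c := by
  rw [hsENorm, hsENorm, ← ENNReal.l2Norm_const_mul]
  congr 1 with k
  rw [Pi.smul_apply, norm_smul, mul_left_comm, ENNReal.ofReal_mul (norm_nonneg r), ofReal_norm]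

lemma hsENorm_D1_le (σ : ℝ) (c : FC) : hsENorm σ (D1 c) ≤ hsENorm (σ + 1) c := by
  refine hsENorm_le_of_forall_le fun k => ?_
  have hD1 : ‖D1 c k‖ = |(k : ℝ)| * ‖c k‖ := by
    rw [D1, norm_mul, norm_mul, Complex.norm_I, one_mul, Complex.norm_intCast]
  rw [hD1, ← mul_assoc, add_div, wt_add]
  gcongr
  · exact wt_nonneg _ _
  · exact abs_le_wt_half k

lemma hsENorm_hilbert_le (σ : ℝ) (c : FC) : hsENorm σ (hilbert c) ≤ hsENorm σ c := by
  refine hsENorm_le_of_forall_le fun k => ?_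
  have hsign : ‖(Int.sign k : ℂ)‖ ≤ 1 := by
    rcases Int.sign_trichotomy k with h | h | h <;> simp [h]
  rw [hilbert, norm_mul, norm_mul, norm_neg, Complex.norm_I, one_mul]
  gcongr
  · exact wt_nonneg _ _
  · exact mul_le_of_le_one_left (norm_nonneg _) hsign

lemma hsENorm_add_le (s : ℝ) (c d : FC) : hsENorm s (c + d) ≤ hsENorm s c + hsENorm s d := by
  refine (ENNReal.l2Norm_mono fun k => ?_).trans (ENNReal.l2Norm_add_le _ _)
  have hw := wt_nonneg (s / 2) k
  rw [Pi.add_apply, Pi.add_apply, ← ENNReal.ofReal_add (by positivity) (by positivity), ← mul_add]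
  gcongr
  exact norm_add_le _ _

lemma hsENorm_tsumFC_le (s : ℝ) (F : ℕ → FC) :
    hsENorm s (tsumFC F) ≤ ∑' n, hsENorm s (F n) :=
  (ENNReal.l2Norm_mono fun k => ofReal_mul_norm_tsum_le (wt_nonneg _ k) _).trans
    (ENNReal.l2Norm_tsum_le _)

lemma tsum_ofReal_wt_mul_norm_le (τ : ℝ) (f : FC) :
    ∑' j, ENNReal.ofReal (wt (τ / 2) j * ‖f j‖)
      ≤ ENNReal.ofReal √(∑' j : ℤ, wt (-1) j) * hsENorm (τ + 1) f := by
  have factor (j : ℤ) : ENNReal.ofReal (wt (τ / 2) j * ‖f j‖)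
      = ENNReal.ofReal (wt (-1 / 2) j) * ENNReal.ofReal (wt ((τ + 1) / 2) j * ‖f j‖) := by
    rw [← ENNReal.ofReal_mul (wt_nonneg _ _), ← mul_assoc, ← wt_add]
    ring_nf
  have hl2 : l2Norm (fun j => ENNReal.ofReal (wt (-1 / 2) j))
      = ENNReal.ofReal √(∑' j : ℤ, wt (-1) j) := by
    rw [ENNReal.l2Norm_ofReal (wt_nonneg _)] <;> simp_rw [wt_half_sq]
    exact summable_wt_neg_one
  rw [tsum_congr factor, ← hl2]
  exact ENNReal.tsum_mul_le_l2Norm_mul_l2Norm _ _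

/-- Peetre's inequality reduces this to Young's inequality, and `‖f̂‖_{ℓ¹} ≲ ‖f‖_{τ+1}` by
Cauchy–Schwarz. -/
lemma hsENorm_mul_le {τ : ℝ} (hτ : 0 ≤ τ) (f g : FC) :
    hsENorm τ (mul f g) ≤ ENNReal.ofReal (prodConst τ) * hsENorm (τ + 1) f * hsENorm τ g := by
  set A : ℤ → ℝ≥0∞ := fun j => ENNReal.ofReal (wt (τ / 2) j * ‖f j‖)
  set B : ℤ → ℝ≥0∞ := fun j => ENNReal.ofReal (wt (τ / 2) j * ‖g j‖)
  have pointwise (k : ℤ) : ENNReal.ofReal (wt (τ / 2) k * ‖mul f g k‖)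
      ≤ ENNReal.ofReal (2 ^ (τ / 2)) * ∑' j, A j * B (k - j) := by
    refine (ofReal_mul_norm_tsum_le (wt_nonneg _ k) _).trans ?_
    rw [← ENNReal.tsum_mul_left]
    refine ENNReal.tsum_le_tsum fun j => ?_
    have peetre := wt_add_le (div_nonneg hτ zero_le_two) j (k - j)
    rw [add_sub_cancel] at peetre
    have hw := wt_nonneg (τ / 2) j
    simp only [A, B]
    rw [← ENNReal.ofReal_mul (by positivity), ← ENNReal.ofReal_mul (by positivity), norm_mul]
    refine ENNReal.ofReal_le_ofReal ?_
    calc wt (τ / 2) k * (‖f j‖ * ‖g (k - j)‖)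
        ≤ 2 ^ (τ / 2) * (wt (τ / 2) j * wt (τ / 2) (k - j)) * (‖f j‖ * ‖g (k - j)‖) := by
          gcongr
      _ = _ := by ring
  calc hsENorm τ (mul f g)
      ≤ l2Norm fun k => ENNReal.ofReal (2 ^ (τ / 2)) * ∑' j, A j * B (k - j) :=
        ENNReal.l2Norm_mono pointwise
    _ = ENNReal.ofReal (2 ^ (τ / 2)) * l2Norm fun k => ∑' j, A j * B (k - j) :=
        ENNReal.l2Norm_const_mul _ _
    _ ≤ ENNReal.ofReal (2 ^ (τ / 2)) * ((∑' j, A j) * hsENorm τ g) := by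
        gcongr
        exact ENNReal.l2Norm_conv_le A B
    _ ≤ ENNReal.ofReal (2 ^ (τ / 2))
          * (ENNReal.ofReal √(∑' j : ℤ, wt (-1) j) * hsENorm (τ + 1) f * hsENorm τ g) := by
        gcongr
        exact tsum_ofReal_wt_mul_norm_le τ f
    _ = _ := by
        rw [prodConst, ENNReal.ofReal_mul (by positivity)]
        ring

lemma hsENorm_lie_le {τ : ℝ} (hτ : 0 ≤ τ) (ξ f : FC) :
    hsENorm τ (lie ξ f)
      ≤ 2 * ENNReal.ofReal (prodConst τ) * hsENorm (τ + 2) ξ * hsENorm (τ + 1) f := by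
  have hD1ξ : hsENorm (τ + 1) (D1 ξ) ≤ hsENorm (τ + 2) ξ :=
    (hsENorm_D1_le _ ξ).trans_eq (by ring_nf)
  calc hsENorm τ (lie ξ f)
      ≤ hsENorm τ (mul ξ (D1 f)) + hsENorm τ (mul (D1 ξ) f) := hsENorm_add_le _ _ _
    _ ≤ ENNReal.ofReal (prodConst τ) * hsENorm (τ + 1) ξ * hsENorm τ (D1 f)
          + ENNReal.ofReal (prodConst τ) * hsENorm (τ + 1) (D1 ξ) * hsENorm τ f :=
        add_le_add (hsENorm_mul_le hτ _ _) (hsENorm_mul_le hτ _ _)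
    _ ≤ ENNReal.ofReal (prodConst τ) * hsENorm (τ + 2) ξ * hsENorm (τ + 1) f
          + ENNReal.ofReal (prodConst τ) * hsENorm (τ + 2) ξ * hsENorm (τ + 1) f := by
        gcongr
        · exact hsENorm_mono (by linarith) ξ
        · exact hsENorm_D1_le τ f
        · exact hsENorm_mono (by linarith) f
    _ = _ := by ring

lemma hsENorm_lie2_le {τ : ℝ} (hτ : 0 ≤ τ) (ξ f : FC) :
    hsENorm τ (lie2 ξ f) ≤ 4 * ENNReal.ofReal (prodConst τ) * ENNReal.ofReal (prodConst (τ + 1))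
      * hsENorm (τ + 3) ξ ^ 2 * hsENorm (τ + 2) f := by
  have inner := hsENorm_lie_le (by linarith : 0 ≤ τ + 1) ξ f
  rw [show τ + 1 + 2 = τ + 3 by ring, show τ + 1 + 1 = τ + 2 by ring] at inner
  calc hsENorm τ (lie ξ (lie ξ f))
      ≤ 2 * ENNReal.ofReal (prodConst τ) * hsENorm (τ + 2) ξ * hsENorm (τ + 1) (lie ξ f) :=
        hsENorm_lie_le hτ _ _
    _ ≤ 2 * ENNReal.ofReal (prodConst τ) * hsENorm (τ + 3) ξ
          * (2 * ENNReal.ofReal (prodConst (τ + 1)) * hsENorm (τ + 3) ξ * hsENorm (τ + 2) f) := by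
        gcongr
        exact hsENorm_mono (by linarith) ξ
    _ = _ := by ring

lemma hsENorm_hilbert_mul_D1_le {s : ℝ} (hs : 2 ≤ s) (θ : FC) :
    hsENorm (s - 2) (mul (hilbert θ) (D1 θ)) ≤ ENNReal.ofReal (prodConst (s - 2)) * hsENorm s θ ^ 2 :=
  calc hsENorm (s - 2) (mul (hilbert θ) (D1 θ))
      ≤ ENNReal.ofReal (prodConst (s - 2)) * hsENorm (s - 2 + 1) (hilbert θ)
          * hsENorm (s - 2) (D1 θ) := hsENorm_mul_le (by linarith) _ _
    _ ≤ ENNReal.ofReal (prodConst (s - 2)) * hsENorm s θ * hsENorm s θ := by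
        gcongr
        · exact (hsENorm_hilbert_le _ θ).trans (hsENorm_mono (by linarith) θ)
        · exact (hsENorm_D1_le _ θ).trans (hsENorm_mono (by linarith) θ)
    _ = _ := by ring

lemma hsENorm_tsumFC_lie2_le {s : ℝ} (hs : 2 ≤ s) (ξ : ℕ → FC) (θ : FC) :
    hsENorm (s - 2) (tsumFC fun k => lie2 (ξ k) θ)
      ≤ 4 * ENNReal.ofReal (prodConst (s - 2)) * ENNReal.ofReal (prodConst (s - 1))
          * (∑' k, hsENorm (s + 1) (ξ k)) ^ 2 * hsENorm s θ := by
  have term (k : ℕ) := hsENorm_lie2_le (by linarith : 0 ≤ s - 2) (ξ k) θ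
  rw [show s - 2 + 1 = s - 1 by ring, show s - 2 + 3 = s + 1 by ring,
    show s - 2 + 2 = s by ring] at term
  have l2_le_l1 : ∑' k, hsENorm (s + 1) (ξ k) ^ 2 ≤ (∑' k, hsENorm (s + 1) (ξ k)) ^ 2 := by
    rw [← ENNReal.l2Norm_sq]
    gcongr
    exact ENNReal.l2Norm_le_tsum _
  calc hsENorm (s - 2) (tsumFC fun k => lie2 (ξ k) θ)
      ≤ ∑' k, hsENorm (s - 2) (lie2 (ξ k) θ) := hsENorm_tsumFC_le _ _
    _ ≤ ∑' k, 4 * ENNReal.ofReal (prodConst (s - 2)) * ENNReal.ofReal (prodConst (s - 1))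
          * hsENorm s θ * hsENorm (s + 1) (ξ k) ^ 2 :=
        ENNReal.tsum_le_tsum fun k => (term k).trans_eq (by ring)
    _ = 4 * ENNReal.ofReal (prodConst (s - 2)) * ENNReal.ofReal (prodConst (s - 1))
          * hsENorm s θ * ∑' k, hsENorm (s + 1) (ξ k) ^ 2 := ENNReal.tsum_mul_left
    _ ≤ 4 * ENNReal.ofReal (prodConst (s - 2)) * ENNReal.ofReal (prodConst (s - 1))
          * hsENorm s θ * (∑' k, hsENorm (s + 1) (ξ k)) ^ 2 := by gcongr
    _ = _ := by ring

lemma hsENorm_gCCF_le {s : ℝ} (hs : 2 ≤ s) (ξ : ℕ → FC) (θ : FC) :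
    hsENorm (s - 2) (gCCF ξ θ)
      ≤ ENNReal.ofReal (prodConst (s - 2)) * hsENorm s θ ^ 2
        + 4 * ENNReal.ofReal (prodConst (s - 2)) * ENNReal.ofReal (prodConst (s - 1))
          * (∑' k, hsENorm (s + 1) (ξ k)) ^ 2 * hsENorm s θ := by
  have half : ‖(1 / 2 : ℝ)‖ₑ ≤ 1 := by
    rw [← ofReal_norm, ENNReal.ofReal_le_one]; norm_num
  refine (hsENorm_add_le _ _ _).trans (add_le_add ?_ ?_)
  · rw [hsENorm_neg]
    exact hsENorm_hilbert_mul_D1_le hs θ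
  · rw [hsENorm_smul]
    exact (mul_le_of_le_one_left' half).trans (hsENorm_tsumFC_lie2_le hs ξ θ)

lemma l2Norm_hsENorm_lie_le {s : ℝ} (hs : 1 ≤ s) (ξ : ℕ → FC) (θ : FC) :
    l2Norm (fun k => hsENorm (s - 1) (lie (ξ k) θ))
      ≤ 2 * ENNReal.ofReal (prodConst (s - 1)) * (∑' k, hsENorm (s + 1) (ξ k)) * hsENorm s θ := by
  have term (k : ℕ) := hsENorm_lie_le (by linarith : 0 ≤ s - 1) (ξ k) θ
  rw [show s - 1 + 2 = s + 1 by ring, sub_add_cancel] at term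
  calc l2Norm (fun k => hsENorm (s - 1) (lie (ξ k) θ))
      ≤ l2Norm fun k => 2 * ENNReal.ofReal (prodConst (s - 1)) * hsENorm s θ
          * hsENorm (s + 1) (ξ k) :=
        ENNReal.l2Norm_mono fun k => (term k).trans_eq (by ring)
    _ ≤ 2 * ENNReal.ofReal (prodConst (s - 1)) * hsENorm s θ * ∑' k, hsENorm (s + 1) (ξ k) := by
        rw [ENNReal.l2Norm_const_mul]
        gcongr
        exact ENNReal.l2Norm_le_tsum _
    _ = _ := by ring

lemma tsum_hsENorm_eq_ofReal {ι : Type*} {σ : ℝ} {f : ι → FC} (hmem : ∀ i, memHs σ (f i))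
    (hsum : Summable fun i => hsNorm σ (f i)) :
    ∑' i, hsENorm σ (f i) = ENNReal.ofReal (∑' i, hsNorm σ (f i)) := by
  rw [ENNReal.ofReal_tsum_of_nonneg (fun i => hsNorm_nonneg _ _) hsum]
  exact tsum_congr fun i => (ofReal_hsNorm (hmem i)).symm

lemma hsNorm_gCCF_le {s Ξ : ℝ} (hs : 2 ≤ s) {ξ : ℕ → FC} {θ : FC}
    (hΞ : ∑' k, hsENorm (s + 1) (ξ k) = ENNReal.ofReal Ξ) (hΞ0 : 0 ≤ Ξ) (hθ : memHs s θ) :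
    hsNorm (s - 2) (gCCF ξ θ) ≤ prodConst (s - 2) * hsNorm s θ ^ 2
      + 4 * prodConst (s - 2) * prodConst (s - 1) * Ξ ^ 2 * hsNorm s θ := by
  have hK₁ := prodConst_nonneg (s - 2)
  have hK₂ := prodConst_nonneg (s - 1)
  have hN := hsNorm_nonneg s θ
  rw [hsNorm_eq_toReal_hsENorm]
  refine ENNReal.toReal_le_of_le_ofReal (by positivity) ((hsENorm_gCCF_le hs ξ θ).trans_eq ?_)
  rw [hΞ, ← ofReal_hsNorm hθ, ENNReal.ofReal_add (by positivity) (by positivity)]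
  simp only [ENNReal.ofReal_mul', ENNReal.ofReal_pow, ENNReal.ofReal_ofNat, hK₁, hK₂, hΞ0, hN,
    sq_nonneg]

lemma summable_and_sqrt_tsum_hsNorm_lie_sq_le {s Ξ : ℝ} (hs : 1 ≤ s) {ξ : ℕ → FC} {θ : FC}
    (hΞ : ∑' k, hsENorm (s + 1) (ξ k) = ENNReal.ofReal Ξ) (hΞ0 : 0 ≤ Ξ) (hθ : memHs s θ) :
    Summable (fun k => hsNorm (s - 1) (lie (ξ k) θ) ^ 2) ∧
      √(∑' k, hsNorm (s - 1) (lie (ξ k) θ) ^ 2) ≤ 2 * prodConst (s - 1) * Ξ * hsNorm s θ := by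
  have hK₂ := prodConst_nonneg (s - 1)
  have hN := hsNorm_nonneg s θ
  simp_rw [hsNorm_eq_toReal_hsENorm (s - 1)]
  refine ENNReal.summable_and_sqrt_tsum_le_of_l2Norm_le (by positivity)
    ((l2Norm_hsENorm_lie_le hs ξ θ).trans_eq ?_)
  rw [hΞ, ← ofReal_hsNorm hθ]
  simp only [ENNReal.ofReal_mul', ENNReal.ofReal_ofNat, hK₂, hΞ0, hN]

end FC

theorem statement4_general (s : ℝ) (hs : 5 / 2 < s) (ξ : ℕ → FC)
    (hξmem : ∀ σ : ℝ, 0 ≤ σ → ∀ k : ℕ, FC.memHs σ (ξ k))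
    (hξsum : ∀ σ : ℝ, 0 ≤ σ → Summable fun k : ℕ => FC.hsNorm σ (ξ k)) :
    ∃ C > (0 : ℝ), ∀ θ : FC, FC.memHs s θ → FC.isReal θ →
      (FC.hsNorm (s - 2) (gCCF ξ θ) ≤ C * (1 + FC.hsNorm s θ ^ 2)) ∧
      (Summable (fun k : ℕ => FC.hsNorm (s - 1) (FC.lie (ξ k) θ) ^ 2) ∧
        Real.sqrt (∑' k : ℕ, FC.hsNorm (s - 1) (FC.lie (ξ k) θ) ^ 2)
          ≤ C * FC.hsNorm s θ) := by
  set K₁ := FC.prodConst (s - 2)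
  set K₂ := FC.prodConst (s - 1)
  set Ξ := ∑' k, FC.hsNorm (s + 1) (ξ k)
  have hK₁ : 0 ≤ K₁ := FC.prodConst_nonneg _
  have hK₂ : 0 ≤ K₂ := FC.prodConst_nonneg _
  have hΞ0 : 0 ≤ Ξ := tsum_nonneg fun k => FC.hsNorm_nonneg _ _
  have hΞ := FC.tsum_hsENorm_eq_ofReal (hξmem (s + 1) (by linarith)) (hξsum (s + 1) (by linarith))
  refine ⟨K₁ + 4 * K₁ * K₂ * Ξ ^ 2 + 2 * K₂ * Ξ + 1, by positivity, fun θ hθ _ => ?_⟩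
  have drift := FC.hsNorm_gCCF_le (by linarith) hΞ hΞ0 hθ
  obtain ⟨hsum, hsqrt⟩ := FC.summable_and_sqrt_tsum_hsNorm_lie_sq_le (by linarith) hΞ hΞ0 hθ
  have hN0 := FC.hsNorm_nonneg s θ
  have hN1 : FC.hsNorm s θ ≤ 1 + FC.hsNorm s θ ^ 2 := by nlinarith [sq_nonneg (FC.hsNorm s θ - 1)]
  refine ⟨drift.trans ?_, hsum, hsqrt.trans ?_⟩
  · nlinarith [mul_le_mul_of_nonneg_left hN1 (by positivity : 0 ≤ 4 * K₁ * K₂ * Ξ ^ 2),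
      mul_nonneg (by positivity : 0 ≤ 2 * K₂ * Ξ + 1) (by positivity : 0 ≤ 1 + FC.hsNorm s θ ^ 2)]
  · nlinarith [mul_nonneg (by positivity : 0 ≤ K₁ + 4 * K₁ * K₂ * Ξ ^ 2 + 1) hN0]

/-- Let `s > 5/2` and `Σ_k ‖ξ_k‖_{H^σ} < ∞` for all `σ ≥ 0`.  Then there is
`C > 0` such that for all `θ ∈ H^s(𝕋)`: `‖g(θ)‖_{H^{s-2}} ≤ C (1 + ‖θ‖²_{H^s})` and
`(Σ_k ‖𝓛_{ξ_k} θ‖²_{H^{s-1}})^{1/2} ≤ C ‖θ‖_{H^s}`. -/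
theorem statement4 (s : ℝ) (hs : 5 / 2 < s) (ξ : ℕ → FC)
    (hξmem : ∀ σ : ℝ, 0 ≤ σ → ∀ k : ℕ, FC.memHs σ (ξ k))
    (hξreal : ∀ k : ℕ, FC.isReal (ξ k))
    (hξsum : ∀ σ : ℝ, 0 ≤ σ → Summable fun k : ℕ => FC.hsNorm σ (ξ k)) :
    ∃ C > (0 : ℝ), ∀ θ : FC, FC.memHs s θ → FC.isReal θ →
      (FC.hsNorm (s - 2) (gCCF ξ θ) ≤ C * (1 + FC.hsNorm s θ ^ 2)) ∧
      (Summable (fun k : ℕ => FC.hsNorm (s - 1) (FC.lie (ξ k) θ) ^ 2) ∧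
        Real.sqrt (∑' k : ℕ, FC.hsNorm (s - 1) (FC.lie (ξ k) θ) ^ 2)
          ≤ C * FC.hsNorm s θ) :=
  statement4_general s hs ξ hξmem hξsum
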